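/- arXiv:2205.04141 — 3 statements merged into one kernel-verified Lean document; each statement's English description precedes it below -/
import Mathlib

section
/- For all positive real numbers A and B, and for every n ≥ A·max(3B/2, 1)^B, the integral ∫_n^∞ t^{1/2}·exp(-(t/A)^{1/B}) dt is at most A^{1/B}·B·max(3B/2, 1)·n^{3/2 - 1/B}·exp(-(n/A)^{1/B}). -/
/-!
With `M = max (3B/2) 1`, `C = A^(1/B) B M` and `p = 3/2 - 1/B`, the function
`G t = -C t^p exp(-(t/A)^(1/B))` has derivative
`(M t^(1/2) - C p t^(1/2 - 1/B)) exp(-(t/A)^(1/B))`. For `t ≥ A M^B` we have `A^(1/B) M ≤ t^(1/B)`,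
which makes the subtracted term at most `(M - 1) t^(1/2)`, so `G'` dominates the integrand on
`[n, ∞)`. As `G` tends to `0` at infinity, the integral is at most `-G n`.
-/

open MeasureTheory Real Filter Set Topology

theorem setIntegral_Ioi_le_neg_of_hasDerivAt_of_le {f g g' : ℝ → ℝ} {a : ℝ}
    (hderiv : ∀ t ∈ Ici a, HasDerivAt g (g' t) t) (hg'0 : ∀ t ∈ Ioi a, 0 ≤ g' t)
    (hg : Tendsto g atTop (𝓝 0)) (hfg : ∀ t ∈ Ioi a, f t ≤ g' t) :
    ∫ t in Ioi a, f t ≤ -g a := by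
  have hint : ∫ t in Ioi a, g' t = 0 - g a :=
    integral_Ioi_of_hasDerivAt_of_nonneg' hderiv hg'0 hg
  rw [← zero_sub, ← hint]
  by_cases hf : IntegrableOn f (Ioi a)
  · exact setIntegral_mono_on hf (integrableOn_Ioi_deriv_of_nonneg' hderiv hg'0 hg)
      measurableSet_Ioi hfg
  · rw [integral_undef hf]
    exact setIntegral_nonneg measurableSet_Ioi hg'0

theorem hasDerivAt_rpow_mul_exp_neg_div_rpow {A t : ℝ} (hA : 0 < A) (ht : 0 < t) (p q : ℝ) :
    HasDerivAt (fun x => x ^ p * exp (-(x / A) ^ q))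
      ((p * t ^ (p - 1) - q / A ^ q * t ^ (p + q - 1)) * exp (-(t / A) ^ q)) t := by
  have hpow : HasDerivAt (fun x => (x / A) ^ q) (q * (t / A) ^ (q - 1) * (1 / A)) t := by
    simpa [Function.comp_def] using
      (hasDerivAt_rpow_const (p := q) (Or.inl (div_pos ht hA).ne')).comp t
        ((hasDerivAt_id t).div_const A)
  refine ((hasDerivAt_rpow_const (p := p) (Or.inl ht.ne')).mul
    ((hasDerivAt_exp _).comp t hpow.neg)).congr_deriv ?_
  have hA' : A ^ q = A ^ (q - 1) * A := by rw [← rpow_add_one hA.ne', sub_add_cancel]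
  have ht' : t ^ (p + q - 1) = t ^ p * t ^ (q - 1) := by rw [← rpow_add ht, add_sub_assoc]
  simp only [Function.comp_apply, Pi.neg_apply, div_rpow ht.le hA.le]
  rw [ht', hA']
  have : A ^ (q - 1) ≠ 0 := (rpow_pos_of_pos hA _).ne'
  field_simp
  ring

theorem tendsto_rpow_mul_exp_neg_div_rpow_atTop {A q : ℝ} (hA : 0 < A) (hq : 0 < q) (p : ℝ) :
    Tendsto (fun t => t ^ p * exp (-(t / A) ^ q)) atTop (𝓝 0) := by
  have h := (tendsto_rpow_mul_exp_neg_mul_atTop_nhds_zero (p / q) (A ^ q)⁻¹ (by positivity)).comp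
    (tendsto_rpow_atTop hq)
  refine h.congr' ?_
  filter_upwards [eventually_gt_atTop 0] with t ht
  simp only [Function.comp_apply]
  rw [← rpow_mul ht.le, mul_div_cancel₀ p hq.ne', div_rpow ht.le hA.le]
  ring_nf

theorem rpow_one_div_mul_le_of_mul_rpow_le {A M B t : ℝ} (hA : 0 < A) (hM : 0 ≤ M) (hB : 0 < B)
    (h : A * M ^ B ≤ t) : A ^ (1 / B) * M ≤ t ^ (1 / B) := by
  calc A ^ (1 / B) * M = (A * M ^ B) ^ (1 / B) := by
        rw [mul_rpow hA.le (rpow_nonneg hM B), ← rpow_mul hM, mul_one_div_cancel hB.ne',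
          rpow_one]
    _ ≤ t ^ (1 / B) := rpow_le_rpow (by positivity) h (by positivity)

theorem rpow_half_le_of_mul_max_rpow_le {A B t : ℝ} (hA : 0 < A) (hB : 0 < B)
    (ht : A * max (3 * B / 2) 1 ^ B ≤ t) :
    t ^ (1 / 2 : ℝ) ≤ max (3 * B / 2) 1 * t ^ (1 / 2 : ℝ) -
      A ^ (1 / B) * B * max (3 * B / 2) 1 * (3 / 2 - 1 / B) * t ^ (1 / 2 - 1 / B) := by
  set M := max (3 * B / 2) 1
  have ht0 : 0 < t := lt_of_lt_of_le (by positivity) ht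
  rcases le_total (3 * B / 2) 1 with hB1 | hB1
  · have hM : M = 1 := max_eq_right hB1
    have hp : 3 / 2 - 1 / B ≤ 0 := by
      rw [sub_nonpos, le_div_iff₀ hB]; linarith
    have : 0 ≤ A ^ (1 / B) * B * M * t ^ (1 / 2 - 1 / B) := by positivity
    rw [hM] at this ⊢
    nlinarith
  · have hM : M = 3 * B / 2 := max_eq_left hB1
    have hcoeff : B * (3 / 2 - 1 / B) = M - 1 := by rw [hM]; field_simp
    have hAM := rpow_one_div_mul_le_of_mul_rpow_le hA (by positivity) hB ht
    have hsplit : t ^ (1 / 2 : ℝ) = t ^ (1 / B) * t ^ (1 / 2 - 1 / B) := by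
      rw [← rpow_add ht0, add_sub_cancel]
    suffices A ^ (1 / B) * B * M * (3 / 2 - 1 / B) * t ^ (1 / 2 - 1 / B) ≤
        M * t ^ (1 / 2 : ℝ) - t ^ (1 / 2 : ℝ) by linarith
    calc A ^ (1 / B) * B * M * (3 / 2 - 1 / B) * t ^ (1 / 2 - 1 / B)
        = (M - 1) * t ^ (1 / 2 - 1 / B) * (A ^ (1 / B) * M) := by rw [← hcoeff]; ring
      _ ≤ (M - 1) * t ^ (1 / 2 - 1 / B) * t ^ (1 / B) := by
          have : 0 ≤ M - 1 := by linarith [le_max_right (3 * B / 2) 1]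
          gcongr
      _ = M * t ^ (1 / 2 : ℝ) - t ^ (1 / 2 : ℝ) := by rw [hsplit]; ring

theorem hasDerivAt_neg_const_mul_rpow_mul_exp {A B M t : ℝ} (hA : 0 < A) (hB : 0 < B)
    (ht : 0 < t) :
    HasDerivAt (fun x => -(A ^ (1 / B) * B * M * (x ^ (3 / 2 - 1 / B) * exp (-(x / A) ^ (1 / B)))))
      ((M * t ^ (1 / 2 : ℝ) - A ^ (1 / B) * B * M * (3 / 2 - 1 / B) * t ^ (1 / 2 - 1 / B)) *
        exp (-(t / A) ^ (1 / B))) t := by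
  refine ((hasDerivAt_rpow_mul_exp_neg_div_rpow hA ht _ _).const_mul _).neg.congr_deriv ?_
  have hA' : A ^ (1 / B) ≠ 0 := (rpow_pos_of_pos hA _).ne'
  rw [show (3 / 2 - 1 / B) + 1 / B - 1 = (1 / 2 : ℝ) by ring,
    show (3 / 2 - 1 / B) - 1 = (1 / 2 - 1 / B : ℝ) by ring]
  field_simp
  ring

theorem stmt2 (A B n : ℝ) (hA : 0 < A) (hB : 0 < B)
    (hn : A * (max (3 * B / 2) 1) ^ B ≤ n) :
    ∫ t in Set.Ioi n, t ^ ((1 : ℝ) / 2) * Real.exp (-(t / A) ^ ((1 : ℝ) / B)) ≤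
      A ^ ((1 : ℝ) / B) * B * max (3 * B / 2) 1 * n ^ ((3 : ℝ) / 2 - 1 / B) *
        Real.exp (-(n / A) ^ ((1 : ℝ) / B)) := by
  have hn0 : 0 < n := lt_of_lt_of_le (by positivity) hn
  have hderiv (t : ℝ) (ht : t ∈ Ici n) :=
    hasDerivAt_neg_const_mul_rpow_mul_exp (M := max (3 * B / 2) 1) hA hB (hn0.trans_le ht)
  have hbound (t : ℝ) (ht : t ∈ Ioi n) : t ^ (1 / 2 : ℝ) * exp (-(t / A) ^ (1 / B)) ≤
      (max (3 * B / 2) 1 * t ^ (1 / 2 : ℝ) - A ^ (1 / B) * B * max (3 * B / 2) 1 *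
        (3 / 2 - 1 / B) * t ^ (1 / 2 - 1 / B)) * exp (-(t / A) ^ (1 / B)) := by
    gcongr
    exact rpow_half_le_of_mul_max_rpow_le hA hB (hn.trans ht.le)
  have hnonneg (t : ℝ) (ht : t ∈ Ioi n) :=
    (mul_nonneg (rpow_nonneg (hn0.trans ht).le _) (exp_pos _).le).trans (hbound t ht)
  have hlim := ((tendsto_rpow_mul_exp_neg_div_rpow_atTop hA (one_div_pos.2 hB)
    (3 / 2 - 1 / B)).const_mul (A ^ (1 / B) * B * max (3 * B / 2) 1)).neg
  rw [mul_zero, neg_zero] at hlim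
  simpa only [neg_neg, mul_assoc] using
    setIntegral_Ioi_le_neg_of_hasDerivAt_of_le hderiv hnonneg hlim hbound
end

section
/- For every real a ≥ 1 and every real x > a, the upper incomplete gamma function satisfies Γ(a, x) ≤ a · x^{a-1} · exp(-x). -/
open MeasureTheory Real

/-- The upper incomplete gamma function `Γ(a, x) = ∫_x^∞ v^{a-1} e^{-v} dv`. -/
noncomputable def upperGamma (a x : ℝ) : ℝ :=
  ∫ v in Set.Ioi x, v ^ (a - 1) * Real.exp (-v)

/-! For `v > x` and `a ≥ 1` the tangent bound `log (v / x) ≤ v / x - 1` gives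
`v ^ (a - 1) e^{-v} ≤ x ^ (a - 1) e^{-(a - 1)} e^{-k v}` with `k = (x - (a - 1)) / x`, so integrating
the exponential yields `Γ(a, x) ≤ x / (x - (a - 1)) · x ^ (a - 1) e^{-x}`, and
`x / (x - (a - 1)) ≤ a` is equivalent to `0 ≤ (a - 1) (x - a)`. -/

lemma rpow_le_rpow_mul_exp {b x v : ℝ} (hb : 0 ≤ b) (hx : 0 < x) (hv : 0 ≤ v) :
    v ^ b ≤ x ^ b * exp (b * (v / x - 1)) := by
  have hvx : v / x ≤ exp (v / x - 1) := by linarith [add_one_le_exp (v / x - 1)]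
  calc v ^ b = x ^ b * (v / x) ^ b := by
        rw [div_rpow hv hx.le, mul_div_cancel₀ _ (rpow_pos_of_pos hx b).ne']
    _ ≤ x ^ b * exp (v / x - 1) ^ b := by gcongr
    _ = x ^ b * exp (b * (v / x - 1)) := by rw [← exp_mul, mul_comm (v / x - 1)]

lemma upperGamma_integrand_le_exp {a x v : ℝ} (ha : 1 ≤ a) (hx : 0 < x) (hv : 0 ≤ v) :
    v ^ (a - 1) * exp (-v) ≤ x ^ (a - 1) * exp (-(a - 1)) * exp (-((x - (a - 1)) / x) * v) := by
  calc v ^ (a - 1) * exp (-v) ≤ x ^ (a - 1) * exp ((a - 1) * (v / x - 1)) * exp (-v) := by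
        gcongr; exact rpow_le_rpow_mul_exp (by linarith) hx hv
    _ = x ^ (a - 1) * exp (-(a - 1)) * exp (-((x - (a - 1)) / x) * v) := by
        rw [mul_assoc, ← exp_add, mul_assoc, ← exp_add]
        congr 2
        field_simp
        ring

lemma upperGamma_le_div_mul {a x : ℝ} (ha : 1 ≤ a) (hx : a - 1 < x) :
    upperGamma a x ≤ x / (x - (a - 1)) * x ^ (a - 1) * exp (-x) := by
  have hx0 : 0 < x := by linarith
  set k := (x - (a - 1)) / x with hk
  have hk0 : 0 < k := div_pos (by linarith) hx0
  have hkx : k * x = x - (a - 1) := div_mul_cancel₀ _ hx0.ne'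
  calc upperGamma a x ≤ ∫ v in Set.Ioi x, x ^ (a - 1) * exp (-(a - 1)) * exp (-k * v) := by
        refine integral_mono_of_nonneg ?_ ((integrableOn_exp_mul_Ioi (by linarith) x).const_mul _) ?_
        · filter_upwards [ae_restrict_mem measurableSet_Ioi] with v hv
          have hv0 : 0 < v := hx0.trans hv
          positivity
        · filter_upwards [ae_restrict_mem measurableSet_Ioi] with v hv
          exact upperGamma_integrand_le_exp ha hx0 (hx0.trans hv).le
    _ = x ^ (a - 1) * exp (-(a - 1)) * (exp (-(k * x)) / k) := by
        rw [integral_const_mul, integral_exp_mul_Ioi (by linarith), neg_mul, neg_div_neg_eq]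
    _ = x / (x - (a - 1)) * x ^ (a - 1) * exp (-x) := by
        rw [hkx, hk]
        have hexp : exp (-(a - 1)) * exp (-(x - (a - 1))) = exp (-x) := by
          rw [← exp_add]; ring_nf
        field_simp
        rw [hexp]

theorem stmt4 (a x : ℝ) (ha : 1 ≤ a) (hx : a < x) :
    upperGamma a x ≤ a * x ^ (a - 1) * Real.exp (-x) := by
  have hxa : 0 < x - (a - 1) := by linarith
  have hpow : 0 < x ^ (a - 1) := rpow_pos_of_pos (by linarith) _
  have hratio : x / (x - (a - 1)) ≤ a := by
    rw [div_le_iff₀ hxa]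
    nlinarith
  calc upperGamma a x ≤ x / (x - (a - 1)) * x ^ (a - 1) * exp (-x) :=
        upperGamma_le_div_mul ha (by linarith)
    _ ≤ a * x ^ (a - 1) * exp (-x) := by gcongr
end

section
/- Let A ≥ 1 and B > 0, and suppose a sequence (a_n) of nonnegative reals satisfies a_n ≤ 2e·n^{1/2}·exp(-(n/A)^{1/B}) for all n ≥ 1. Then (a_n) is summable, and for all integers n ≥ A·max(3B/2,1)^B + 1, the tail sum ∑_{k ≥ n} a_k is at most 6·A^{1/B}·B·max(3B/2,1)·(n-1)^{3/2 - 1/B}·exp(-((n-1)/A)^{1/B}). -/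
/-!
Write `φ x = (x / A) ^ (1 / B)`. The majorant `x ^ (1/2) * exp (-φ x)` is decreasing once
`φ x ≥ B / 2`, so the tail `∑_{k ≥ n} a k` is at most `2e` times its integral over
`[n - 1, ∞)`.
Where `φ x ≥ M = max (3B/2) 1`, the majorant is at most `A ^ (1/B) * B * M` times the negative
derivative of `x ^ (3/2 - 1/B) * exp (-φ x)`, which bounds that integral; finally `2e ≤ 6`.
-/

open Real Set MeasureTheory

noncomputable def stretchedExp (A B p x : ℝ) : ℝ := x ^ p * exp (-(x / A) ^ (1 / B))

lemma stretchedExp_nonneg (A B p : ℝ) {x : ℝ} (hx : 0 ≤ x) : 0 ≤ stretchedExp A B p x :=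
  mul_nonneg (rpow_nonneg hx p) (exp_pos _).le

lemma hasDerivAt_stretchedExp (A B p : ℝ) {x : ℝ} (hA : A ≠ 0) (hx : x ≠ 0) :
    HasDerivAt (stretchedExp A B p)
      (x ^ (p - 1) * exp (-(x / A) ^ (1 / B)) * (p - (x / A) ^ (1 / B) / B)) x := by
  have hxA : x / A ≠ 0 := div_ne_zero hx hA
  have hpow := ((hasDerivAt_id' x).div_const A).rpow_const (p := 1 / B) (Or.inl hxA)
  refine (((hasDerivAt_id' x).rpow_const (p := p) (Or.inl hx)).mul hpow.neg.exp).congr_deriv ?_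
  rw [Pi.neg_apply, rpow_sub_one hxA, rpow_sub_one hx]
  field_simp
  ring

lemma antitoneOn_stretchedExp {A B p x₀ : ℝ} (hA : 0 < A) (hB : 0 < B) (hx₀ : 0 < x₀)
    (hpB : p * B ≤ (x₀ / A) ^ (1 / B)) : AntitoneOn (stretchedExp A B p) (Ici x₀) := by
  have hderiv : ∀ x ∈ Ici x₀, HasDerivAt (stretchedExp A B p)
      (x ^ (p - 1) * exp (-(x / A) ^ (1 / B)) * (p - (x / A) ^ (1 / B) / B)) x :=
    fun x hx => hasDerivAt_stretchedExp A B p hA.ne' (hx₀.trans_le hx).ne'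
  refine antitoneOn_of_deriv_nonpos (convex_Ici x₀)
    (fun x hx => (hderiv x hx).continuousAt.continuousWithinAt)
    (fun x hx => (hderiv x (interior_subset hx)).differentiableAt.differentiableWithinAt)
    fun x hx => ?_
  rw [interior_Ici] at hx
  have hx₀x : x₀ ≤ x := le_of_lt hx
  have hφ : p ≤ (x / A) ^ (1 / B) / B := by
    rw [le_div_iff₀ hB]
    exact hpB.trans (by gcongr)
  rw [(hderiv x hx₀x).deriv]
  exact mul_nonpos_of_nonneg_of_nonpos
    (mul_nonneg (rpow_nonneg (hx₀.trans hx).le _) (exp_pos _).le) (by linarith)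

lemma stretchedExp_half_le_neg_deriv {A B M x : ℝ} (hA : 0 < A) (hB : 0 < B) (hM : 1 ≤ M)
    (hMB : 3 * B / 2 ≤ M) (hx : 0 < x) (hφ : M ≤ (x / A) ^ (1 / B)) :
    stretchedExp A B (1 / 2) x ≤ -(A ^ (1 / B) * B * M * (x ^ (3 / 2 - 1 / B - 1) *
      exp (-(x / A) ^ (1 / B)) * (3 / 2 - 1 / B - (x / A) ^ (1 / B) / B))) := by
  set φ := (x / A) ^ (1 / B) with hφ_def
  have hsplit : x ^ (1 / 2 : ℝ) = A ^ (1 / B) * x ^ (3 / 2 - 1 / B - 1) * φ := by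
    have hApow : A ^ (1 / B) ≠ 0 := (rpow_pos_of_pos hA _).ne'
    rw [hφ_def, div_rpow hx.le hA.le, mul_div_assoc', mul_assoc, ← rpow_add hx,
      mul_div_cancel_left₀ _ hApow]
    ring_nf
  have hcoeff : φ ≤ B * M * (φ / B - (3 / 2 - 1 / B)) := by
    have : B * M * (φ / B - (3 / 2 - 1 / B)) = M * φ - 3 * B / 2 * M + M := by
      field_simp
      ring
    nlinarith
  set c := A ^ (1 / B) * x ^ (3 / 2 - 1 / B - 1) * exp (-φ)
  have hc : 0 ≤ c := by positivity
  calc stretchedExp A B (1 / 2) x = c * φ := by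
        rw [stretchedExp, hsplit]
        ring
    _ ≤ c * (B * M * (φ / B - (3 / 2 - 1 / B))) := mul_le_mul_of_nonneg_left hcoeff hc
    _ = _ := by ring

lemma integral_stretchedExp_half_le {A B M x₀ X : ℝ} (hA : 0 < A) (hB : 0 < B)
    (hM : 1 ≤ M) (hMB : 3 * B / 2 ≤ M) (hx₀ : 0 < x₀) (hφ : M ≤ (x₀ / A) ^ (1 / B))
    (hX : x₀ ≤ X) :
    ∫ x in x₀..X, stretchedExp A B (1 / 2) x ≤
      A ^ (1 / B) * B * M * stretchedExp A B (3 / 2 - 1 / B) x₀ := by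
  set K := A ^ (1 / B) * B * M
  have hderiv : ∀ x ∈ Ici x₀,
      HasDerivAt (fun y => -(K * stretchedExp A B (3 / 2 - 1 / B) y))
        (-(K * (x ^ (3 / 2 - 1 / B - 1) * exp (-(x / A) ^ (1 / B)) *
          (3 / 2 - 1 / B - (x / A) ^ (1 / B) / B)))) x :=
    fun x hx => ((hasDerivAt_stretchedExp A B _ hA.ne' (hx₀.trans_le hx).ne').const_mul K).neg
  have hintegrable : IntegrableOn (stretchedExp A B (1 / 2)) (Icc x₀ X) :=
    ((antitoneOn_stretchedExp (p := 1 / 2) hA hB hx₀ (by linarith)).mono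
      Icc_subset_Ici_self).integrableOn_isCompact isCompact_Icc
  have hFTC := intervalIntegral.integral_le_sub_of_hasDeriv_right_of_le hX
    (fun x hx => (hderiv x hx.1).continuousAt.continuousWithinAt)
    (fun x hx => (hderiv x hx.1.le).hasDerivWithinAt) hintegrable
    fun x hx => stretchedExp_half_le_neg_deriv hA hB hM hMB (hx₀.trans hx.1)
      (hφ.trans (by gcongr; exact hx.1.le))
  have hX_nonneg : 0 ≤ K * stretchedExp A B (3 / 2 - 1 / B) X :=
    mul_nonneg (by positivity) (stretchedExp_nonneg A B _ (hx₀.le.trans hX))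
  linarith

lemma summable_and_tsum_le_of_le_antitoneOn {f : ℝ → ℝ} {a : ℕ → ℝ} {x₀ C : ℝ}
    (hf : AntitoneOn f (Ici x₀)) (hC : ∀ X, x₀ ≤ X → ∫ x in x₀..X, f x ≤ C)
    (ha₀ : ∀ k, 0 ≤ a k) (ha : ∀ k, a k ≤ f (x₀ + (k + 1 : ℕ))) :
    Summable a ∧ ∑' k, a k ≤ C := by
  have hsum (N : ℕ) : ∑ k ∈ Finset.range N, a k ≤ C :=
    (Finset.sum_le_sum fun k _ => ha k).trans <|
      ((hf.mono Icc_subset_Ici_self).sum_le_integral).trans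
        (hC _ (le_add_of_nonneg_right N.cast_nonneg))
  exact ⟨summable_of_sum_range_le ha₀ hsum, Real.tsum_le_of_sum_range_le ha₀ hsum⟩

lemma summable_and_tsum_tail_le {A B : ℝ} (hA : 0 < A) (hB : 0 < B) {a : ℕ → ℝ}
    (hpos : ∀ n, 0 ≤ a n)
    (hbound : ∀ n : ℕ, 1 ≤ n → a n ≤ 2 * exp 1 * stretchedExp A B (1 / 2) n)
    {n : ℕ} (hn : A * (max (3 * B / 2) 1) ^ B + 1 ≤ (n : ℝ)) :
    Summable (fun k => a (k + n)) ∧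
      ∑' k, a (k + n) ≤ 6 * (A ^ (1 / B) * B * max (3 * B / 2) 1 *
        stretchedExp A B (3 / 2 - 1 / B) (n - 1)) := by
  set M := max (3 * B / 2) 1
  have hM : 1 ≤ M := le_max_right _ _
  have hMB : 3 * B / 2 ≤ M := le_max_left _ _
  have hAM : 0 < A * M ^ B := mul_pos hA (rpow_pos_of_pos (by linarith) _)
  have hx₀ : 0 < (n : ℝ) - 1 := by linarith
  have hφ : M ≤ (((n : ℝ) - 1) / A) ^ (1 / B) := by
    rw [one_div, le_rpow_inv_iff_of_pos (by linarith) (div_pos hx₀ hA).le hB, le_div_iff₀ hA]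
    linarith
  have hn₁ : 1 ≤ n := by exact_mod_cast (by linarith : (1 : ℝ) ≤ n)
  have hanti := antitoneOn_stretchedExp (p := 1 / 2) hA hB hx₀ (by linarith)
  obtain ⟨hsummable, htsum⟩ := summable_and_tsum_le_of_le_antitoneOn
    (f := fun x => 2 * exp 1 * stretchedExp A B (1 / 2) x)
    (fun x hx y hy hxy => mul_le_mul_of_nonneg_left (hanti hx hy hxy) (by positivity))
    (fun X hX => by
      rw [intervalIntegral.integral_const_mul]
      exact mul_le_mul_of_nonneg_left
        (integral_stretchedExp_half_le hA hB hM hMB hx₀ hφ hX) (by positivity))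
    (fun k => hpos (k + n))
    (fun k => by
      convert hbound (k + n) (by omega) using 3
      push_cast
      ring)
  refine ⟨hsummable, htsum.trans (mul_le_mul_of_nonneg_right ?_ ?_)⟩
  · linarith [exp_one_lt_d9]
  · exact mul_nonneg (by positivity) (stretchedExp_nonneg A B _ hx₀.le)

theorem stmt10 (A B : ℝ) (hA : 1 ≤ A) (hB : 0 < B) (a : ℕ → ℝ) (hpos : ∀ n, 0 ≤ a n)
    (hbound : ∀ n : ℕ, 1 ≤ n →
      a n ≤ 2 * Real.exp 1 * (n : ℝ) ^ ((1 : ℝ) / 2) *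
        Real.exp (-((n : ℝ) / A) ^ ((1 : ℝ) / B))) :
    Summable a ∧
      ∀ n : ℕ, A * (max (3 * B / 2) 1) ^ B + 1 ≤ (n : ℝ) →
        ∑' k : ℕ, a (k + n) ≤
          6 * A ^ ((1 : ℝ) / B) * B * max (3 * B / 2) 1 *
            ((n : ℝ) - 1) ^ ((3 : ℝ) / 2 - 1 / B) *
            Real.exp (-(((n : ℝ) - 1) / A) ^ ((1 : ℝ) / B)) := by
  have hbound' : ∀ n : ℕ, 1 ≤ n → a n ≤ 2 * exp 1 * stretchedExp A B (1 / 2) n :=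
    fun n hn => (hbound n hn).trans_eq (mul_assoc _ _ _)
  constructor
  · exact (summable_nat_add_iff _).mp
      (summable_and_tsum_tail_le (by linarith) hB hpos hbound' (Nat.le_ceil _)).1
  · intro n hn
    exact (summable_and_tsum_tail_le (by linarith) hB hpos hbound' hn).2.trans_eq (by
      rw [stretchedExp]
      ring)
end
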